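/- arXiv:1605.08180 — 2 statements merged into one kernel-verified Lean document; each statement's English description precedes it below -/
import Mathlib

section
/- Let P = [[P₁₁, 0],[P₂₁, P₂₂]] with P₁₁ ∈ ℝ^{r×r} irreducible, |P| row-stochastic, P with positive diagonal, and G(P) containing a spanning tree rooted in G(P₁₁). If G(P₁₁) is structurally balanced with at least one negative edge, then along solutions of x(t+1) = Px(t): the states of agents 1,...,r converge to values ±C (agents in one part of the bipartition converge to C and the others to −C, with C ≠ 0 for almost all initial conditions), and the states x_i(t), i > r, converge to limits lying in the interval [−|C|, |C|]. -/
open Matrix Filter MeasureTheory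

def StronglyConnected {α : Type*} (adj : α → α → Prop) : Prop :=
  ∀ a b, Relation.ReflTransGen adj a b

/-- The limiting behavior asserted in the theorem: along `x(t+1) = P x(t)`
started from `x0`, the first `r` agents converge to `C` or `-C` according to
the bipartition `f`, and every remaining agent's state converges to a limit
lying in `[-|C|, |C|]`. -/
def SeparatesTo {r m : ℕ} (P : Matrix (Fin r ⊕ Fin m) (Fin r ⊕ Fin m) ℝ)
    (f : Fin r → Bool) (x0 : Fin r ⊕ Fin m → ℝ) (C : ℝ) : Prop :=
  (∀ i : Fin r, Tendsto (fun t => (P ^ t *ᵥ x0) (Sum.inl i)) atTop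
      (nhds (if f i then C else -C))) ∧
  (∀ j : Fin m, ∃ L : ℝ, |L| ≤ |C| ∧
      Tendsto (fun t => (P ^ t *ᵥ x0) (Sum.inr j)) atTop (nhds L))

/-!
Conjugating `P₁₁` by the signature matrix `D = diag(±1)` of the bipartition gives `|P₁₁|`, a
stochastic matrix that is primitive (irreducible with positive diagonal). Every `N` steps of a
primitive stochastic matrix contract the oscillation `max x - min x` by a fixed factor, so
`|P₁₁|ᵗ → 𝟙 ξᵀ`, hence `P₁₁ᵗ = D |P₁₁|ᵗ D → D 𝟙 ξᵀ D`: the leaders converge to `±C` with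
`C = ξᵀ D x₁(0)`, a nonzero linear functional of the initial state, so `C ≠ 0` almost everywhere.

The followers obey `z(t+1) = P₂₁ y(t) + P₂₂ z(t)`. The spanning tree makes every row of some
power `P₂₂ ^ T` have absolute sum `< 1`, so `z` converges to the fixed point `L = P₂₁ y* + P₂₂ L`.
Since the rows of `|P|` sum to `1`, the map `v ↦ P₂₁ y* + P₂₂ v` preserves the sup-norm ball of
radius `|C|`, which therefore contains `L`.
-/

open Topology Finset

theorem tendsto_zero_of_le_mul_add {a b : ℕ → ℝ} {κ : ℝ} (ha : ∀ t, 0 ≤ a t) (hκ : κ < 1)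
    (hb : Tendsto b atTop (𝓝 0)) (hrec : ∀ t, a (t + 1) ≤ κ * a t + b t) :
    Tendsto a atTop (𝓝 0) := by
  set κ' := max κ 0
  have hκ'1 : κ' < 1 := max_lt hκ one_pos
  have hrec' : ∀ t, a (t + 1) ≤ κ' * a t + b t := fun t =>
    (hrec t).trans (by gcongr; exacts [ha t, le_max_left _ _])
  refine tendsto_order.2 ⟨fun c hc => .of_forall fun t => hc.trans_le (ha t), fun ε hε => ?_⟩
  obtain ⟨t₀, ht₀⟩ := eventually_atTop.1 <|
    (tendsto_order.1 hb).2 ((1 - κ') * (ε / 2)) (by nlinarith)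
  have hgeom : ∀ n, a (t₀ + n) - ε / 2 ≤ κ' ^ n * (a t₀ - ε / 2) := by
    intro n
    induction n with
    | zero => simp
    | succ n ih =>
      have := ht₀ (t₀ + n) (Nat.le_add_right _ _)
      calc a (t₀ + (n + 1)) - ε / 2 ≤ κ' * (a (t₀ + n) - ε / 2) := by
            rw [← add_assoc]; nlinarith [hrec' (t₀ + n)]
        _ ≤ κ' ^ (n + 1) * (a t₀ - ε / 2) := by
            rw [pow_succ', mul_assoc]; exact mul_le_mul_of_nonneg_left ih (le_max_right _ _)
  obtain ⟨n₀, hn₀⟩ := eventually_atTop.1 <| (tendsto_order.1 <|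
    (tendsto_pow_atTop_nhds_zero_of_lt_one (le_max_right _ _) hκ'1).mul_const (a t₀)).2
      (ε / 2) (by simpa using half_pos hε)
  refine eventually_atTop.2 ⟨t₀ + n₀, fun t ht => ?_⟩
  obtain ⟨n, rfl⟩ := Nat.exists_eq_add_of_le (le_of_add_le_left ht)
  have := hgeom n
  have := hn₀ n (by omega)
  nlinarith [pow_nonneg (le_max_right κ 0) n]

section Contraction
variable {R E : Type*} [Semiring R] [SeminormedAddCommGroup E] [Module R E] {f : Module.End R E}

theorem norm_pow_apply_le (hf : ∀ v, ‖f v‖ ≤ ‖v‖) (k : ℕ) (v : E) : ‖(f ^ k) v‖ ≤ ‖v‖ := by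
  induction k with
  | zero => simp
  | succ k ih => rw [pow_succ', Module.End.mul_apply]; exact (hf _).trans ih

theorem tendsto_zero_of_eq_add_apply {T : ℕ} {ρ : ℝ} (hf : ∀ v, ‖f v‖ ≤ ‖v‖) (hρ : ρ < 1)
    (hfT : ∀ v, ‖(f ^ T) v‖ ≤ ρ * ‖v‖) {w e : ℕ → E} (he : Tendsto e atTop (𝓝 0))
    (hw : ∀ t, w (t + 1) = e t + f (w t)) : Tendsto w atTop (𝓝 0) := by
  -- `N` is a norm equivalent to `‖·‖` in which `f` is a strict contraction
  set N : E → ℝ := fun v => ∑ k ∈ range (T + 1), ‖(f ^ k) v‖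
  have hN_ge : ∀ v, ‖v‖ ≤ N v := fun v => by
    simpa using single_le_sum (f := fun k => ‖(f ^ k) v‖) (fun _ _ => norm_nonneg _)
      (mem_range.2 T.succ_pos)
  have hN_le : ∀ v, N v ≤ (T + 1) * ‖v‖ := fun v => by
    simpa using sum_le_sum fun k (_ : k ∈ range (T + 1)) => norm_pow_apply_le hf k v
  have hN_add : ∀ v v', N (v + v') ≤ N v + N v' := fun v v' => by
    simpa only [N, map_add, ← sum_add_distrib] using sum_le_sum fun k _ => norm_add_le _ _
  have hN_apply : ∀ v, N (f v) ≤ (1 - (1 - ρ) / (T + 1)) * N v := fun v => by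
    have hshift : N (f v) + ‖v‖ = N v + ‖(f ^ (T + 1)) v‖ := by
      have h := sum_range_succ' (fun k => ‖(f ^ k) v‖) (T + 1)
      simp only [pow_succ, Module.End.mul_apply, pow_zero, Module.End.one_apply] at h
      rw [← h, sum_range_succ]
    have hlast : ‖(f ^ (T + 1)) v‖ ≤ ρ * ‖v‖ := by
      rw [pow_succ', Module.End.mul_apply]; exact (hf _).trans (hfT v)
    have hT : (0 : ℝ) < T + 1 := by positivity
    have hdecay : (1 - ρ) * N v / (T + 1) ≤ N v - N (f v) := by
      rw [div_le_iff₀ hT]; nlinarith [hN_le v]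
    calc N (f v) ≤ N v - (1 - ρ) * N v / (T + 1) := by linarith
      _ = (1 - (1 - ρ) / (T + 1)) * N v := by ring
  refine squeeze_zero_norm (fun t => hN_ge (w t)) (tendsto_zero_of_le_mul_add
    (κ := 1 - (1 - ρ) / (T + 1)) (b := fun t => (T + 1) * ‖e t‖)
    (fun t => (norm_nonneg _).trans (hN_ge _)) ?_ ?_ fun t => ?_)
  · have : (0 : ℝ) < (1 - ρ) / (T + 1) := by apply div_pos <;> linarith
    linarith
  · simpa using (tendsto_norm_zero.comp he).const_mul ((T : ℝ) + 1)
  · rw [hw]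
    linarith [hN_add (e t) (f (w t)), hN_le (e t), hN_apply (w t)]

end Contraction

theorem abs_mulVec_le {m n : Type*} [Fintype n] {B : Matrix m n ℝ} {c : ℝ} {v : n → ℝ}
    (hv : ∀ j, |v j| ≤ c) (i : m) :
    |(B *ᵥ v) i| ≤ (∑ j, |B i j|) * c := by
  calc |(B *ᵥ v) i| ≤ ∑ j, |B i j * v j| := abs_sum_le_sum_abs _ _
    _ = ∑ j, |B i j| * |v j| := by simp_rw [abs_mul]
    _ ≤ (∑ j, |B i j|) * c := by
        rw [sum_mul]; gcongr with j; exact hv j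

theorem sum_abs_mul_apply_le {l m n : Type*} [Fintype m] [Fintype n] (A : Matrix l m ℝ)
    (B : Matrix m n ℝ) (i : l) : ∑ k, |(A * B) i k| ≤ ∑ j, |A i j| * ∑ k, |B j k| := by
  calc ∑ k, |(A * B) i k| ≤ ∑ k, ∑ j, |A i j| * |B j k| := sum_le_sum fun k _ => by
        simpa only [mul_apply, abs_mul] using abs_sum_le_sum_abs (fun j => A i j * B j k) univ
    _ = ∑ j, |A i j| * ∑ k, |B j k| := by rw [sum_comm]; simp_rw [mul_sum]

section LinftyOpNorm
attribute [local instance] Matrix.linftyOpNormedAddCommGroup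
variable {m n : Type*} [Fintype m] [Fintype n] {A : Matrix m n ℝ} {c : ℝ}

theorem linfty_opNorm_le_iff_sum_abs (hc : 0 ≤ c) : ‖A‖ ≤ c ↔ ∀ i, ∑ j, |A i j| ≤ c := by
  lift c to NNReal using hc
  simp_rw [linfty_opNorm_def, NNReal.coe_le_coe, Finset.sup_le_iff, ← NNReal.coe_le_coe,
    NNReal.coe_sum, coe_nnnorm, Real.norm_eq_abs, mem_univ, true_imp_iff]

theorem linfty_opNorm_lt_iff_sum_abs (hc : 0 < c) : ‖A‖ < c ↔ ∀ i, ∑ j, |A i j| < c := by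
  lift c to NNReal using hc.le
  simp_rw [linfty_opNorm_def, NNReal.coe_lt_coe, Finset.sup_lt_iff (NNReal.coe_pos.1 hc),
    ← NNReal.coe_lt_coe, NNReal.coe_sum, coe_nnnorm, Real.norm_eq_abs, mem_univ, true_imp_iff]

variable {q : Type*} [Fintype q] [DecidableEq q] {M : Matrix q q ℝ}

theorem tendsto_of_eq_add_mulVec {T : ℕ} (hM : ∀ i, ∑ j, |M i j| ≤ 1)
    (hMT : ∀ i, ∑ j, |(M ^ T) i j| < 1) {u z : ℕ → q → ℝ} {u' L : q → ℝ}
    (hu : Tendsto u atTop (𝓝 u')) (hL : L = u' + M *ᵥ L)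
    (hz : ∀ t, z (t + 1) = u t + M *ᵥ z t) : Tendsto z atTop (𝓝 L) := by
  have hf : ∀ v, ‖toLin' M v‖ ≤ ‖v‖ := fun v => by
    simpa [toLin'_apply] using (linfty_opNorm_mulVec M v).trans
      (mul_le_of_le_one_left (norm_nonneg v) ((linfty_opNorm_le_iff_sum_abs zero_le_one).2 hM))
  have hfT : ∀ v, ‖(toLin' M ^ T) v‖ ≤ ‖M ^ T‖ * ‖v‖ := fun v => by
    rw [← toLin'_pow, toLin'_apply]; exact linfty_opNorm_mulVec _ v
  refine tendsto_sub_nhds_zero_iff.1 <| tendsto_zero_of_eq_add_apply hf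
    ((linfty_opNorm_lt_iff_sum_abs one_pos).2 hMT) hfT (tendsto_sub_nhds_zero_iff.2 hu)
    fun t => ?_
  have : z (t + 1) - L = u t + M *ᵥ z t - (u' + M *ᵥ L) := by rw [hz t, ← hL]
  rw [this, toLin'_apply, mulVec_sub]
  abel

theorem exists_eq_add_mulVec {T : ℕ} (hMT : ∀ i, ∑ j, |(M ^ T) i j| < 1) (u' : q → ℝ) :
    ∃ L, L = u' + M *ᵥ L := by
  have hfix : ∀ d, M *ᵥ d = d → d = 0 := fun d hd => by
    have hpow : ∀ k, M ^ k *ᵥ d = d := fun k => by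
      induction k with
      | zero => simp
      | succ k ih => rw [pow_succ, ← mulVec_mulVec, hd, ih]
    have hle := linfty_opNorm_mulVec (M ^ T) d
    rw [hpow] at hle
    have hlt := (linfty_opNorm_lt_iff_sum_abs one_pos).2 hMT
    exact norm_le_zero_iff.1 (by nlinarith [norm_nonneg d])
  have hinj : Function.Injective (1 - M).mulVec := fun v w hvw => by
    rw [← sub_eq_zero, ← mulVec_sub, sub_mulVec, one_mulVec, sub_eq_zero] at hvw
    exact sub_eq_zero.1 (hfix _ hvw.symm)
  obtain ⟨L, hL⟩ := mulVec_surjective_iff_isUnit.2 (mulVec_injective_iff_isUnit.1 hinj) u'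
  exact ⟨L, by rw [← hL, sub_mulVec, one_mulVec]; abel⟩

theorem norm_le_of_eq_add_mulVec {T : ℕ} (hM : ∀ i, ∑ j, |M i j| ≤ 1)
    (hMT : ∀ i, ∑ j, |(M ^ T) i j| < 1) {u' L : q → ℝ} (hL : L = u' + M *ᵥ L) (hc : 0 ≤ c)
    (hu' : ∀ i, |u' i| + (∑ j, |M i j|) * c ≤ c) : ‖L‖ ≤ c := by
  set F : (q → ℝ) → q → ℝ := fun v => u' + M *ᵥ v
  have hball : ∀ v, ‖v‖ ≤ c → ‖F v‖ ≤ c := fun v hv => (pi_norm_le_iff_of_nonneg hc).2 fun i => by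
    have hvj : ∀ j, |v j| ≤ c := fun j => (Real.norm_eq_abs _ ▸ norm_le_pi_norm v j).trans hv
    calc ‖F v i‖ ≤ |u' i| + |(M *ᵥ v) i| := by rw [Real.norm_eq_abs]; exact abs_add_le _ _
      _ ≤ c := by linarith [abs_mulVec_le (B := M) hvj i, hu' i]
  have hiter : ∀ t, ‖F^[t] 0‖ ≤ c := fun t => by
    induction t with
    | zero => simpa using hc
    | succ t ih => rw [Function.iterate_succ_apply']; exact hball _ ih
  exact le_of_tendsto' ((continuous_norm.tendsto L).comp (tendsto_of_eq_add_mulVec hM hMT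
    tendsto_const_nhds hL fun t => Function.iterate_succ_apply' F t 0)) hiter

theorem exists_pow_sum_abs_lt_one {q : Type*} [Fintype q] [DecidableEq q] {M : Matrix q q ℝ}
    (hM : ∀ i, ∑ j, |M i j| ≤ 1)
    (hleak : ∀ i, ∃ j, Relation.ReflTransGen (fun a b => M a b ≠ 0) i j ∧ ∑ k, |M j k| < 1) :
    ∃ T, ∀ i, ∑ j, |(M ^ T) i j| < 1 := by
  set r : ℕ → q → ℝ := fun t i => ∑ j, |(M ^ t) i j|
  have hsucc : ∀ t i, r (t + 1) i ≤ ∑ j, |M i j| * r t j := fun t i => by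
    simpa only [r, pow_succ'] using sum_abs_mul_apply_le M (M ^ t) i
  have hle : ∀ t i, r t i ≤ 1 := fun t => by
    induction t with
    | zero => intro i; simp [r, one_apply, apply_ite (abs : ℝ → ℝ)]
    | succ t ih => exact fun i => (hsucc t i).trans <| (sum_le_sum fun j _ =>
        mul_le_of_le_one_right (abs_nonneg _) (ih j)).trans (hM i)
  have hanti : ∀ i, Antitone fun t => r t i := fun i => antitone_nat_of_succ_le fun t => by
    simpa only [r, pow_succ] using (sum_abs_mul_apply_le (M ^ t) M i).trans
      (sum_le_sum fun j _ => mul_le_of_le_one_right (abs_nonneg _) (hM j))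
  have hpos : ∀ i, ∃ t, r t i < 1 := fun i => by
    obtain ⟨j, hij, hj⟩ := hleak i
    induction hij using Relation.ReflTransGen.head_induction_on with
    | refl => exact ⟨1, by simpa [r] using hj⟩
    | @head a k hak _ ih =>
      obtain ⟨t, ht⟩ := ih
      refine ⟨t + 1, (hsucc t a).trans_lt ((sum_lt_sum (fun l _ => ?_) ⟨k, mem_univ k, ?_⟩).trans_le
        ((sum_congr rfl fun l _ => mul_one _).trans_le (hM a)))⟩
      · exact mul_le_mul_of_nonneg_left (hle t l) (abs_nonneg _)
      · exact mul_lt_mul_of_pos_left ht (abs_pos.2 hak)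
  choose t ht using hpos
  exact ⟨univ.sup t, fun i => (hanti i (le_sup (mem_univ i))).trans_lt (ht i)⟩

section Consensus
variable {n : Type*} [Fintype n] [DecidableEq n] {A : Matrix n n ℝ}

theorem isPrimitive_of_diag_pos (h0 : ∀ i j, 0 ≤ A i j) (hdiag : ∀ i, 0 < A i i)
    (hconn : StronglyConnected fun j i => 0 < A i j) : A.IsPrimitive := by
  have hstep : ∀ t i k j, 0 < A i k → 0 < (A ^ t) k j → 0 < (A ^ (t + 1)) i j :=
    fun t i k j hik hkj => (mul_pos hik hkj).trans_le <| by
      rw [pow_succ', mul_apply]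
      exact single_le_sum (f := fun l => A i l * (A ^ t) l j)
        (fun l _ => mul_nonneg (h0 i l) (pow_apply_nonneg h0 t l j)) (mem_univ k)
  have hmono : ∀ i j t t', t ≤ t' → 0 < (A ^ t) i j → 0 < (A ^ t') i j := by
    intro i j t t' htt' hpos
    induction t', htt' using Nat.le_induction with
    | base => exact hpos
    | succ t' _ ih => exact hstep t' i i j (hdiag i) ih
  have hreach : ∀ i j, ∃ t, 0 < (A ^ t) i j := by
    intro i j
    induction hconn j i with
    | refl => exact ⟨0, by simp⟩
    | tail _ hA ih => obtain ⟨t, ht⟩ := ih; exact ⟨t + 1, hstep t _ _ _ hA ht⟩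
  choose t ht using hreach
  refine ⟨h0, univ.sup (fun p : n × n => t p.1 p.2) + 1, Nat.succ_pos _, fun i j => ?_⟩
  exact hmono i j _ _ ((le_sup (f := fun p : n × n => t p.1 p.2) (mem_univ (i, j))).trans
    (Nat.le_succ _)) (ht i j)

theorem iInf_le_mulVec (hA : A ∈ rowStochastic ℝ n) (x : n → ℝ) (i : n) :
    ⨅ j, x j ≤ (A *ᵥ x) i := by
  calc ⨅ j, x j = ∑ j, A i j * ⨅ j, x j := by
        rw [← sum_mul, sum_row_of_mem_rowStochastic hA, one_mul]
    _ ≤ (A *ᵥ x) i := sum_le_sum fun j _ => mul_le_mul_of_nonneg_left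
        (ciInf_le (Finite.bddBelow_range x) j) (nonneg_of_mem_rowStochastic hA)

variable [Nonempty n]

theorem mulVec_le_iSup_sub (hA : A ∈ rowStochastic ℝ n) {δ : ℝ} {i : n}
    (hδ : ∀ j, δ ≤ A i j) (x : n → ℝ) :
    (A *ᵥ x) i ≤ (⨆ j, x j) - δ * ((⨆ j, x j) - ⨅ j, x j) := by
  set M := ⨆ j, x j
  obtain ⟨j₀, hj₀⟩ := exists_eq_ciInf_of_finite (f := x)
  have hgap : ∀ j, 0 ≤ A i j * (M - x j) := fun j => mul_nonneg
    (nonneg_of_mem_rowStochastic hA) (sub_nonneg.2 (le_ciSup (Finite.bddAbove_range x) j))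
  have hdecomp : (A *ᵥ x) i = M - ∑ j, A i j * (M - x j) := by
    simp only [mul_sub, sum_sub_distrib, ← sum_mul, sum_row_of_mem_rowStochastic hA, one_mul,
      sub_sub_cancel]
    rfl
  calc (A *ᵥ x) i = M - ∑ j, A i j * (M - x j) := hdecomp
    _ ≤ M - A i j₀ * (M - x j₀) := by
        gcongr; exact single_le_sum (fun j _ => hgap j) (mem_univ j₀)
    _ ≤ M - δ * (M - ⨅ j, x j) := by
        rw [hj₀]; gcongr
        · exact sub_nonneg.2 (hj₀ ▸ le_ciSup (Finite.bddAbove_range x) j₀)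
        · exact hδ j₀

theorem exists_tendsto_pow_mulVec (hA : A ∈ rowStochastic ℝ n) (hprim : A.IsPrimitive)
    (x : n → ℝ) : ∃ α, ∀ i, Tendsto (fun t => (A ^ t *ᵥ x) i) atTop (𝓝 α) := by
  obtain ⟨-, N, -, hN⟩ := hprim
  obtain ⟨δ, hδ, hδN⟩ : ∃ δ > 0, ∀ i j, δ ≤ (A ^ N) i j := by
    obtain ⟨p, hp⟩ := exists_eq_ciInf_of_finite (f := fun p : n × n => (A ^ N) p.1 p.2)
    exact ⟨_, hp ▸ hN p.1 p.2, fun i j => ciInf_le (Finite.bddBelow_range _) (i, j)⟩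
  set X : ℕ → n → ℝ := fun t => A ^ t *ᵥ x
  set M : ℕ → ℝ := fun t => ⨆ i, X t i
  set m : ℕ → ℝ := fun t => ⨅ i, X t i
  have hX : ∀ t k, X (t + k) = A ^ k *ᵥ X t := fun t k => by
    simp only [X, mulVec_mulVec, add_comm t, pow_add]
  have hm_le : ∀ t i, m t ≤ X t i := fun t i => ciInf_le (Finite.bddBelow_range _) i
  have hle_M : ∀ t i, X t i ≤ M t := fun t i => le_ciSup (Finite.bddAbove_range _) i
  have hm_step : ∀ t k, m t ≤ m (t + k) := fun t k =>
    le_ciInf fun i => hX t k ▸ iInf_le_mulVec (pow_mem hA k) _ i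
  have hM_step : ∀ t, M (t + N) ≤ M t - δ * (M t - m t) := fun t =>
    ciSup_le fun i => hX t N ▸ mulVec_le_iSup_sub (pow_mem hA N) (hδN i) _
  have hM_succ : ∀ t, M (t + 1) ≤ M t := fun t => ciSup_le fun i => by
    simpa [hX t 1] using mulVec_le_iSup_sub hA (δ := 0) (i := i)
      (fun _ => nonneg_of_mem_rowStochastic hA) (X t)
  have hm_mono : Monotone m := monotone_nat_of_le_succ fun t => hm_step t 1
  have hM_anti : Antitone M := antitone_nat_of_succ_le hM_succ
  obtain ⟨i₀⟩ := ‹Nonempty n›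
  set osc : ℕ → ℝ := fun t => M t - m t
  have hosc_nonneg : ∀ t, 0 ≤ osc t := fun t => sub_nonneg.2 ((hm_le t i₀).trans (hle_M t i₀))
  have hosc_lim : Tendsto osc atTop (𝓝 (⨅ t, osc t)) :=
    tendsto_atTop_ciInf (fun s t h => sub_le_sub (hM_anti h) (hm_mono h))
      ⟨0, Set.forall_mem_range.2 hosc_nonneg⟩
  have hosc_zero : ⨅ t, osc t = 0 := by
    have hcontr : ⨅ t, osc t ≤ (1 - δ) * ⨅ t, osc t :=
      le_of_tendsto_of_tendsto' ((tendsto_add_atTop_iff_nat N).2 hosc_lim)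
        (hosc_lim.const_mul _) fun t => by linarith [hM_step t, hm_step t N]
    nlinarith [le_ciInf hosc_nonneg]
  have hm_lim : Tendsto m atTop (𝓝 (⨆ t, m t)) := tendsto_atTop_ciSup hm_mono
    ⟨M 0, Set.forall_mem_range.2 fun t =>
      (hm_le t i₀).trans ((hle_M t i₀).trans (hM_anti t.zero_le))⟩
  have hM_lim : Tendsto M atTop (𝓝 (⨆ t, m t)) := by
    simpa [osc, hosc_zero] using hm_lim.add hosc_lim
  exact ⟨_, fun i => tendsto_of_tendsto_of_tendsto_of_le_of_le hm_lim hM_lim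
    (fun t => hm_le t i) (fun t => hle_M t i)⟩

theorem exists_tendsto_pow_replicateRow (hA : A ∈ rowStochastic ℝ n) (hprim : A.IsPrimitive) :
    ∃ ξ : n → ℝ, ∑ j, ξ j = 1 ∧ Tendsto (fun t => A ^ t) atTop (𝓝 (replicateRow n ξ)) := by
  choose ξ hξ using fun j => exists_tendsto_pow_mulVec hA hprim (Pi.single j 1)
  have hlim : Tendsto (fun t => A ^ t) atTop (𝓝 (replicateRow n ξ)) :=
    tendsto_pi_nhds.2 fun i => tendsto_pi_nhds.2 fun j => by
      simpa [mulVec_single_one] using hξ j i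
  obtain ⟨i⟩ := ‹Nonempty n›
  have hrow := tendsto_finsetSum univ fun j _ => tendsto_pi_nhds.1 (tendsto_pi_nhds.1 hlim i) j
  simp only [sum_row_of_mem_rowStochastic (pow_mem hA _), replicateRow_apply] at hrow
  exact ⟨ξ, tendsto_nhds_unique hrow tendsto_const_nhds, hlim⟩

end Consensus

section Gauge
variable {n : Type*} [Fintype n] [DecidableEq n] (f : n → Bool)

def signMatrix : Matrix n n ℝ := diagonal fun i => if f i then 1 else -1

theorem signMatrix_mul_self : signMatrix f * signMatrix f = 1 := by
  rw [signMatrix, diagonal_mul_diagonal, ← diagonal_one]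
  congr 1; funext i; split <;> norm_num

theorem signMatrix_mulVec (v : n → ℝ) : signMatrix f *ᵥ v = fun i => if f i then v i else -v i := by
  funext i; rw [signMatrix, mulVec_diagonal]; split <;> simp

theorem signMatrix_conj_pow (A : Matrix n n ℝ) (t : ℕ) :
    (signMatrix f * A * signMatrix f) ^ t = signMatrix f * A ^ t * signMatrix f :=
  Units.conj_pow ⟨_, _, signMatrix_mul_self f, signMatrix_mul_self f⟩ A t

theorem signMatrix_mul_map_abs_mul_signMatrix {B : Matrix n n ℝ} (hdiag : ∀ i, 0 ≤ B i i)
    (hbal : ∀ i j, i ≠ j → B i j ≠ 0 → (f i = f j ↔ 0 < B i j)) :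
    signMatrix f * B.map abs * signMatrix f = B := by
  ext i j
  simp only [signMatrix, diagonal_mul, mul_diagonal, map_apply]
  by_cases hij : i = j
  · subst hij; split <;> simp [abs_of_nonneg (hdiag i)]
  by_cases hB : B i j = 0
  · simp [hB]
  have hsign := hbal i j hij hB
  rcases lt_or_gt_of_ne hB with hneg | hpos
  · have hf : f i ≠ f j := fun h => (hsign.1 h).not_gt hneg
    rw [abs_of_neg hneg]
    cases hfi : f i <;> cases hfj : f j <;> simp_all
  · have hf : f i = f j := hsign.2 hpos
    rw [abs_of_pos hpos]
    cases hfi : f i <;> cases hfj : f j <;> simp_all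

theorem exists_tendsto_pow_mulVec_of_balanced [Nonempty n] {B : Matrix n n ℝ}
    (hB : B.map abs ∈ rowStochastic ℝ n) (hdiag : ∀ i, 0 < B i i)
    (hconn : StronglyConnected fun j i => B i j ≠ 0)
    (hbal : ∀ i j, i ≠ j → B i j ≠ 0 → (f i = f j ↔ 0 < B i j)) :
    ∃ ξ : n → ℝ, ξ ≠ 0 ∧ ∀ y, Tendsto (fun t => B ^ t *ᵥ y) atTop
      (𝓝 fun i => if f i then ξ ⬝ᵥ y else -(ξ ⬝ᵥ y)) := by
  set D := signMatrix f
  have hprim : (B.map abs).IsPrimitive := isPrimitive_of_diag_pos (fun _ _ => abs_nonneg _)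
    (fun i => abs_pos.2 (hdiag i).ne') fun a b =>
      Relation.ReflTransGen.mono (fun _ _ h => abs_pos.2 h) a b (hconn a b)
  obtain ⟨ξ, hξ, hlim⟩ := exists_tendsto_pow_replicateRow hB hprim
  refine ⟨ξ ᵥ* D, fun h => ?_, fun y => ?_⟩
  · have : ξ = 0 := by simpa [D, vecMul_vecMul, signMatrix_mul_self] using congrArg (· ᵥ* D) h
    simp [this] at hξ
  have hpow : ∀ t, B ^ t = D * B.map abs ^ t * D := fun t => by
    rw [← signMatrix_conj_pow, signMatrix_mul_map_abs_mul_signMatrix f (fun i => (hdiag i).le) hbal]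
  have hlimit : (D * replicateRow n ξ * D) *ᵥ y =
      fun i => if f i then (ξ ᵥ* D) ⬝ᵥ y else -((ξ ᵥ* D) ⬝ᵥ y) := by
    rw [← mulVec_mulVec, ← mulVec_mulVec, replicateRow_mulVec_eq_const, dotProduct_mulVec,
      signMatrix_mulVec]
    rfl
  simp_rw [hpow, ← hlimit]
  exact ((continuous_id.matrix_mulVec continuous_const).tendsto _).comp
    ((tendsto_const_nhds.mul hlim).mul tendsto_const_nhds)

end Gauge

theorem ae_dotProduct_ne_zero {ι : Type*} [Fintype ι] {w : ι → ℝ} (hw : w ≠ 0) :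
    ∀ᵐ x ∂(volume : Measure (ι → ℝ)), w ⬝ᵥ x ≠ 0 := by
  have hker : LinearMap.ker (dotProductBilin ℝ ℝ w) ≠ ⊤ := fun h =>
    hw (dotProduct_self_eq_zero.1 (LinearMap.mem_ker.1 (h ▸ Submodule.mem_top)))
  simpa using measure_eq_zero_iff_ae_notMem.1 (Measure.addHaar_submodule volume _ hker)

section Blocks
variable {ι κ : Type*} [Fintype ι] [Fintype κ]

theorem mulVec_comp_inl {R : Type*} [Semiring R] (P : Matrix (ι ⊕ κ) (ι ⊕ κ) R)
    (v : ι ⊕ κ → R) :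
    (P *ᵥ v) ∘ Sum.inl = P.toBlocks₁₁ *ᵥ (v ∘ Sum.inl) + P.toBlocks₁₂ *ᵥ (v ∘ Sum.inr) := by
  conv_lhs => rw [← fromBlocks_toBlocks P, fromBlocks_mulVec]
  rfl

theorem mulVec_comp_inr {R : Type*} [Semiring R] (P : Matrix (ι ⊕ κ) (ι ⊕ κ) R)
    (v : ι ⊕ κ → R) :
    (P *ᵥ v) ∘ Sum.inr = P.toBlocks₂₁ *ᵥ (v ∘ Sum.inl) + P.toBlocks₂₂ *ᵥ (v ∘ Sum.inr) := by
  conv_lhs => rw [← fromBlocks_toBlocks P, fromBlocks_mulVec]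
  rfl

theorem pow_mulVec_comp_inl [DecidableEq ι] [DecidableEq κ] {R : Type*} [Semiring R]
    {P : Matrix (ι ⊕ κ) (ι ⊕ κ) R} (hP : P.toBlocks₁₂ = 0) (v : ι ⊕ κ → R) (t : ℕ) :
    (P ^ t *ᵥ v) ∘ Sum.inl = P.toBlocks₁₁ ^ t *ᵥ (v ∘ Sum.inl) := by
  induction t with
  | zero => simp
  | succ t ih => rw [pow_succ', ← mulVec_mulVec, mulVec_comp_inl, ih, hP, zero_mulVec, add_zero,
      mulVec_mulVec, ← pow_succ']

theorem exists_reflTransGen_sum_abs_toBlocks₂₂_lt_one {P : Matrix (ι ⊕ κ) (ι ⊕ κ) ℝ}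
    (habs : ∀ k, ∑ j, |P (Sum.inr k) j| ≤ 1) {u : ι} {k : κ}
    (h : Relation.ReflTransGen (fun j i => i ≠ j ∧ P i j ≠ 0) (Sum.inl u) (Sum.inr k)) :
    ∃ l, Relation.ReflTransGen (fun a b => P.toBlocks₂₂ a b ≠ 0) k l ∧
      ∑ j, |P.toBlocks₂₂ l j| < 1 := by
  generalize hv : (Sum.inr k : ι ⊕ κ) = v at h
  induction h generalizing k with
  | refl => cases hv
  | @tail b _ _ hstep ih =>
    subst hv
    rcases b with i | l
    · refine ⟨k, .refl, ?_⟩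
      have hrow := habs k
      rw [Fintype.sum_sum_type] at hrow
      have := single_le_sum (f := fun i => |P (Sum.inr k) (Sum.inl i)|) (fun _ _ => abs_nonneg _)
        (mem_univ i)
      have := abs_pos.2 hstep.2
      simp only [toBlocks₂₂, of_apply] at *
      linarith
    · obtain ⟨j, hlj, hj⟩ := ih rfl
      exact ⟨j, .head hstep.2 hlj, hj⟩

end Blocks

theorem separatesTo_of_tendsto_inl {r m : ℕ} {P : Matrix (Fin r ⊕ Fin m) (Fin r ⊕ Fin m) ℝ}
    {f : Fin r → Bool} {x0 : Fin r ⊕ Fin m → ℝ} {C : ℝ} (habs : ∀ i, ∑ j, |P i j| = 1)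
    {u : Fin r} (hreach : ∀ k, Relation.ReflTransGen (fun j i => i ≠ j ∧ P i j ≠ 0)
      (Sum.inl u) (Sum.inr k))
    (htop : Tendsto (fun t => (P ^ t *ᵥ x0) ∘ Sum.inl) atTop (𝓝 fun i => if f i then C else -C)) :
    SeparatesTo P f x0 C := by
  refine ⟨fun i => tendsto_pi_nhds.1 htop i, fun j => ?_⟩
  set y : Fin r → ℝ := fun i => if f i then C else -C
  have hrow : ∀ k, ∑ i, |P.toBlocks₂₁ k i| + ∑ l, |P.toBlocks₂₂ k l| = 1 := fun k => by
    simpa [Fintype.sum_sum_type, toBlocks₂₁, toBlocks₂₂] using habs (Sum.inr k)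
  have hM : ∀ k, ∑ l, |P.toBlocks₂₂ k l| ≤ 1 := fun k => by
    linarith [hrow k, sum_nonneg fun i (_ : i ∈ univ) => abs_nonneg (P.toBlocks₂₁ k i)]
  obtain ⟨T, hT⟩ := exists_pow_sum_abs_lt_one hM fun k =>
    exists_reflTransGen_sum_abs_toBlocks₂₂_lt_one (fun k => (habs _).le) (hreach k)
  have hbound : ∀ k, |(P.toBlocks₂₁ *ᵥ y) k| + (∑ l, |P.toBlocks₂₂ k l|) * |C| ≤ |C| := fun k => by
    have hy : ∀ i, |y i| ≤ |C| := fun i => by simp only [y]; split <;> simp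
    calc _ ≤ (∑ i, |P.toBlocks₂₁ k i|) * |C| + (∑ l, |P.toBlocks₂₂ k l|) * |C| := by
          gcongr; exact abs_mulVec_le hy k
      _ = |C| := by rw [← add_mul, hrow k, one_mul]
  obtain ⟨L, hL⟩ := exists_eq_add_mulVec hT (P.toBlocks₂₁ *ᵥ y)
  have hlim : Tendsto (fun t => (P ^ t *ᵥ x0) ∘ Sum.inr) atTop (𝓝 L) :=
    tendsto_of_eq_add_mulVec hM hT (((continuous_const.matrix_mulVec continuous_id).tendsto _).comp
      htop) hL fun t => by rw [pow_succ', ← mulVec_mulVec, mulVec_comp_inr]; rfl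
  exact ⟨L j, (Real.norm_eq_abs (L j) ▸ norm_le_pi_norm L j).trans
    (norm_le_of_eq_add_mulVec hM hT hL (abs_nonneg C) hbound), tendsto_pi_nhds.1 hlim j⟩

theorem stmt11_general {r m : ℕ}
    (P : Matrix (Fin r ⊕ Fin m) (Fin r ⊕ Fin m) ℝ)
    (hblock : ∀ (i : Fin r) (j : Fin m), P (Sum.inl i) (Sum.inr j) = 0)
    (habs : ∀ i, ∑ j, |P i j| = 1) (hdiag : ∀ i, 0 < P i i)
    (hirr : StronglyConnected (fun j i : Fin r =>
      i ≠ j ∧ P (Sum.inl i) (Sum.inl j) ≠ 0))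
    (htree : ∃ u : Fin r, ∀ v : Fin r ⊕ Fin m,
      Relation.ReflTransGen (fun j i => i ≠ j ∧ P i j ≠ 0) (Sum.inl u) v)
    -- G(P₁₁) structurally balanced with bipartition f
    (f : Fin r → Bool)
    (hbal : ∀ i j, i ≠ j → P (Sum.inl i) (Sum.inl j) ≠ 0 →
      (f i = f j ↔ 0 < P (Sum.inl i) (Sum.inl j))) :
    (∀ x0 : Fin r ⊕ Fin m → ℝ, ∃ C : ℝ, SeparatesTo P f x0 C) ∧
    (∀ᵐ x0 : Fin r ⊕ Fin m → ℝ ∂volume, ∃ C : ℝ, C ≠ 0 ∧ SeparatesTo P f x0 C) := by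
  obtain ⟨u, hu⟩ := htree
  have : Nonempty (Fin r) := ⟨u⟩
  have hblock' : P.toBlocks₁₂ = 0 := by ext i j; exact hblock i j
  have hstoch : P.toBlocks₁₁.map abs ∈ rowStochastic ℝ (Fin r) :=
    mem_rowStochastic_iff_sum.2 ⟨fun _ _ => abs_nonneg _, fun i => by
      simpa [toBlocks₁₁, Fintype.sum_sum_type, hblock] using habs (Sum.inl i)⟩
  obtain ⟨ξ, hξ, hlim⟩ := exists_tendsto_pow_mulVec_of_balanced f hstoch (fun i => hdiag _)
    (fun a b => Relation.ReflTransGen.mono (fun _ _ h => h.2) a b (hirr a b)) hbal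
  set w : Fin r ⊕ Fin m → ℝ := Sum.elim ξ 0
  have hw : w ≠ 0 := fun h => hξ (funext fun i => congrFun h (Sum.inl i))
  have hsep : ∀ x0, SeparatesTo P f x0 (w ⬝ᵥ x0) := fun x0 => by
    have hC : w ⬝ᵥ x0 = ξ ⬝ᵥ (x0 ∘ Sum.inl) := by simp [w, dotProduct, Fintype.sum_sum_type]
    refine separatesTo_of_tendsto_inl habs (fun _ => hu _) ?_
    simpa only [hC, pow_mulVec_comp_inl hblock'] using hlim (x0 ∘ Sum.inl)
  exact ⟨fun x0 => ⟨_, hsep x0⟩, (ae_dotProduct_ne_zero hw).mono fun x0 hx0 => ⟨_, hx0, hsep x0⟩⟩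

theorem stmt11 {r m : ℕ}
    (P : Matrix (Fin r ⊕ Fin m) (Fin r ⊕ Fin m) ℝ)
    (hblock : ∀ (i : Fin r) (j : Fin m), P (Sum.inl i) (Sum.inr j) = 0)
    (habs : ∀ i, ∑ j, |P i j| = 1) (hdiag : ∀ i, 0 < P i i)
    (hirr : StronglyConnected (fun j i : Fin r =>
      i ≠ j ∧ P (Sum.inl i) (Sum.inl j) ≠ 0))
    (htree : ∃ u : Fin r, ∀ v : Fin r ⊕ Fin m,
      Relation.ReflTransGen (fun j i => i ≠ j ∧ P i j ≠ 0) (Sum.inl u) v)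
    -- G(P₁₁) structurally balanced with bipartition f
    (f : Fin r → Bool)
    (hbal : ∀ i j, i ≠ j → P (Sum.inl i) (Sum.inl j) ≠ 0 →
      (f i = f j ↔ 0 < P (Sum.inl i) (Sum.inl j)))
    -- with at least one negative edge
    (hneg : ∃ i j, P (Sum.inl i) (Sum.inl j) < 0) :
    (∀ x0 : Fin r ⊕ Fin m → ℝ, ∃ C : ℝ, SeparatesTo P f x0 C) ∧
    (∀ᵐ x0 : Fin r ⊕ Fin m → ℝ ∂volume, ∃ C : ℝ, C ≠ 0 ∧ SeparatesTo P f x0 C) :=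
  stmt11_general P hblock habs hdiag hirr htree f hbal
end LinftyOpNorm
end

section
/- Let (P(t))_{t≥0} be a sequence of N×N matrices with positive diagonals such that each |P(t)| is row-stochastic and all nonzero entries satisfy |(P(t))_{ij}| ≥ γ for a fixed γ ∈ (0,1). Suppose there is a fixed bipartition of {1,...,N} into two nonempty sets such that in every graph G(P(t)) all edges between the sets are negative and all edges within each set are positive, and suppose there is an infinite sequence of uniformly bounded intervals [t_i, t_{i+1}) such that the union of graphs G(P(t)) over each interval is strongly connected. Then the system x(t+1) = P(t)x(t) polarizes. -/
open Matrix Filter MeasureTheory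

/-- The trajectory of the time-varying system `x(t+1) = P(t) x(t)`. -/
def traj {N : ℕ} (P : ℕ → Matrix (Fin N) (Fin N) ℝ) (x0 : Fin N → ℝ) :
    ℕ → Fin N → ℝ
  | 0 => x0
  | t + 1 => P t *ᵥ traj P x0 t

/-!
Conjugating by the diagonal sign matrix `D` of the bipartition turns every `P(t)` into the
nonnegative row-stochastic matrix `|P(t)| = D P(t) D`, so `y = D x` follows a consensus dynamics.
Over `card ι` consecutive intervals the influence of an agent holding the minimum of `y` reaches
every agent (each union graph is strongly connected) with weight at least `γ ^ (card ι * B)`, so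
the spread `max y - min y` contracts geometrically and `y` converges to a common value `c(x₀)`.
The map `x₀ ↦ c(x₀)` is linear and equals `1` at `x₀ = D 1`; it therefore vanishes only on a
hyperplane, a null set, and off it `x = D y` converges to `±c(x₀)` according to the bipartition.
-/

open scoped Topology

theorem Relation.ReflTransGen.exists_rel_mem_not_mem {α : Type*} {r : α → α → Prop} {S : Set α}
    {a b : α} (h : Relation.ReflTransGen r a b) (ha : a ∈ S) (hb : b ∉ S) :
    ∃ x ∈ S, ∃ y ∉ S, r x y := by
  induction h with
  | refl => exact absurd ha hb
  | @tail c d _ hcd ih =>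
    by_cases hc : c ∈ S
    · exact ⟨c, hc, d, hb, hcd⟩
    · exact ih hc

theorem Finset.eq_univ_of_forall_exists_mem_succ {ι : Type*} [Fintype ι] {S : ℕ → Finset ι}
    (hS : Monotone S) (hgrow : ∀ j, S j ≠ univ → ∃ i ∉ S j, i ∈ S (j + 1)) :
    S (Fintype.card ι) = univ := by
  classical
  have hcard : ∀ j, min j (Fintype.card ι) ≤ (S j).card := by
    intro j
    induction j with
    | zero => simp
    | succ j ih =>
      by_cases hj : S j = univ
      · have hfull := hS j.le_succ
        rw [hj, univ_subset_iff] at hfull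
        rw [hfull, card_univ]
        exact min_le_right _ _
      · obtain ⟨i, hi, hi'⟩ := hgrow j hj
        have := card_le_card (insert_subset hi' (hS j.le_succ))
        rw [card_insert_of_notMem hi] at this
        omega
  exact eq_univ_of_card _ (le_antisymm (card_le_univ _) (by simpa using hcard (Fintype.card ι)))

theorem le_add_mul_of_sub_le {ts : ℕ → ℕ} {B : ℕ} (hbdd : ∀ k, ts (k + 1) - ts k ≤ B) (k m : ℕ) :
    ts (k + m) ≤ ts k + m * B := by
  induction m with
  | zero => simp
  | succ m ih =>
    have := hbdd (k + m)
    rw [← add_assoc, add_one_mul]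
    omega

theorem exists_tendsto_of_antitone_of_monotone {M m : ℕ → ℝ} (hM : Antitone M) (hm : Monotone m)
    (hmM : ∀ t, m t ≤ M t) {φ : ℕ → ℕ} (hφ : Tendsto φ atTop atTop)
    (hgap : Tendsto (fun k => M (φ k) - m (φ k)) atTop (𝓝 0)) :
    ∃ c, Tendsto m atTop (𝓝 c) ∧ Tendsto M atTop (𝓝 c) := by
  have hm_lim := tendsto_atTop_ciSup hm
    ⟨M 0, Set.forall_mem_range.2 fun t => (hmM t).trans (hM t.zero_le)⟩
  have hM_lim := tendsto_atTop_ciInf hM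
    ⟨m 0, Set.forall_mem_range.2 fun t => (hm t.zero_le).trans (hmM t)⟩
  have hlim_eq := tendsto_nhds_unique ((hM_lim.comp hφ).sub (hm_lim.comp hφ)) hgap
  exact ⟨_, hm_lim, (sub_eq_zero.1 hlim_eq) ▸ hM_lim⟩

theorem ae_linearMap_ne_zero {E : Type*} [NormedAddCommGroup E] [NormedSpace ℝ E]
    [MeasurableSpace E] [BorelSpace E] [FiniteDimensional ℝ E] (μ : Measure E)
    [μ.IsAddHaarMeasure] {L : E →ₗ[ℝ] ℝ} (hL : L ≠ 0) : ∀ᵐ x ∂μ, L x ≠ 0 := by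
  rw [ae_iff]
  convert Measure.addHaar_submodule μ _ (mt LinearMap.ker_eq_top.1 hL)
  ext x
  simp

section Stochastic

variable {ι : Type*} [Fintype ι] [DecidableEq ι] {M : Matrix ι ι ℝ}

theorem mulVec_apply_le_sub_of_mem_rowStochastic (hM : M ∈ rowStochastic ℝ ι) {v : ι → ℝ}
    {b c : ℝ} {k : ι} (hv : ∀ j, v j ≤ b) (hk : v k ≤ b - c) (i : ι) :
    (M *ᵥ v) i ≤ b - M i k * c := by
  have hsum : ∑ j, M i j * (b - (Pi.single k c : ι → ℝ) j) = b - M i k * c := by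
    simp [mul_sub, Finset.sum_sub_distrib, ← Finset.sum_mul, sum_row_of_mem_rowStochastic hM,
      Pi.single_apply]
  rw [← hsum]
  refine Finset.sum_le_sum fun j _ => mul_le_mul_of_nonneg_left ?_ (nonneg_of_mem_rowStochastic hM)
  rcases eq_or_ne j k with rfl | hjk
  · simpa using hk
  · simpa [hjk] using hv j

theorem mulVec_apply_le_of_mem_rowStochastic (hM : M ∈ rowStochastic ℝ ι) {v : ι → ℝ} {b : ℝ}
    (hv : ∀ j, v j ≤ b) (i : ι) : (M *ᵥ v) i ≤ b := by
  obtain ⟨k⟩ : Nonempty ι := ⟨i⟩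
  simpa using
    mulVec_apply_le_sub_of_mem_rowStochastic hM hv (c := 0) (k := k) (by simpa using hv k) i

theorem abs_mem_rowStochastic {P : Matrix ι ι ℝ} (h : ∀ i, ∑ j, |P i j| = 1) :
    of (fun i j => |P i j|) ∈ rowStochastic ℝ ι :=
  mem_rowStochastic_iff_sum.2 ⟨fun _ _ => abs_nonneg _, h⟩

end Stochastic

section Consensus

variable {ι : Type*} [Fintype ι] [DecidableEq ι] {A : ℕ → Matrix ι ι ℝ} {y : ℕ → ι → ℝ}

open scoped Classical in
noncomputable def reachSet (A : ℕ → Matrix ι ι ℝ) (t₀ : ℕ) (j₀ : ι) : ℕ → Finset ι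
  | 0 => {j₀}
  | n + 1 => reachSet A t₀ j₀ n ∪ ({i | ∃ k ∈ reachSet A t₀ j₀ n, A (t₀ + n) i k ≠ 0} : Finset ι)

theorem reachSet_mono (t₀ : ℕ) (j₀ : ι) : Monotone (reachSet A t₀ j₀) :=
  monotone_nat_of_le_succ fun _ => Finset.subset_union_left

theorem mem_reachSet (t₀ : ℕ) (j₀ : ι) (n : ℕ) : j₀ ∈ reachSet A t₀ j₀ n :=
  reachSet_mono t₀ j₀ n.zero_le (Finset.mem_singleton_self j₀)

theorem mem_reachSet_succ {t₀ n : ℕ} {j₀ i k : ι} (hk : k ∈ reachSet A t₀ j₀ n)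
    (hik : A (t₀ + n) i k ≠ 0) : i ∈ reachSet A t₀ j₀ (n + 1) :=
  Finset.mem_union_right _ (by simpa using ⟨k, hk, hik⟩)

theorem exists_mem_reachSet_of_mem_succ (hdiag : ∀ t i, A t i i ≠ 0) {t₀ n : ℕ} {j₀ i : ι}
    (hi : i ∈ reachSet A t₀ j₀ (n + 1)) : ∃ k ∈ reachSet A t₀ j₀ n, A (t₀ + n) i k ≠ 0 := by
  rcases Finset.mem_union.1 hi with hi | hi
  · exact ⟨i, hi, hdiag _ i⟩
  · simpa using hi

theorem reachSet_eq_univ {ts : ℕ → ℕ} (hts : Monotone ts)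
    (hjoint : ∀ k, StronglyConnected fun j i : ι => ∃ s, ts k ≤ s ∧ s < ts (k + 1) ∧ A s i j ≠ 0)
    (k₀ : ℕ) (j₀ : ι) : reachSet A (ts k₀) j₀ (ts (k₀ + Fintype.card ι) - ts k₀) = Finset.univ := by
  set S : ℕ → Finset ι := fun j => reachSet A (ts k₀) j₀ (ts (k₀ + j) - ts k₀)
  refine Finset.eq_univ_of_forall_exists_mem_succ (S := S)
    (fun _ _ hab => reachSet_mono _ _ (Nat.sub_le_sub_right (hts (by omega)) _)) fun j hj => ?_
  obtain ⟨b, hb⟩ := not_forall.1 (mt Finset.eq_univ_iff_forall.2 hj)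
  obtain ⟨k, hk, i, hi, s, hs, hs', hik⟩ :=
    (hjoint (k₀ + j) j₀ b).exists_rel_mem_not_mem (S := {x | x ∈ S j}) (mem_reachSet _ _ _) hb
  have hk₀s : ts k₀ ≤ s := (hts (Nat.le_add_right k₀ j)).trans hs
  have hks : k ∈ reachSet A (ts k₀) j₀ (s - ts k₀) := reachSet_mono _ _ (by omega) hk
  refine ⟨i, hi, reachSet_mono _ _ (?_ : s - ts k₀ + 1 ≤ _) (mem_reachSet_succ hks ?_)⟩
  · exact Nat.succ_le_of_lt (Nat.sub_lt_sub_right hk₀s (by simpa [add_assoc] using hs'))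
  · rwa [Nat.add_sub_cancel' hk₀s]

variable (hA : ∀ t, A t ∈ rowStochastic ℝ ι) (hy : ∀ t, y (t + 1) = A t *ᵥ y t)
include hA hy

theorem trajectory_le {t₀ : ℕ} {b : ℝ} (hb : ∀ j, y t₀ j ≤ b) (n : ℕ) (i : ι) :
    y (t₀ + n) i ≤ b := by
  induction n generalizing i with
  | zero => exact hb i
  | succ n ih => rw [← add_assoc, hy]; exact mulVec_apply_le_of_mem_rowStochastic (hA _) ih i

theorem le_trajectory {t₀ : ℕ} {b : ℝ} (hb : ∀ j, b ≤ y t₀ j) (n : ℕ) (i : ι) :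
    b ≤ y (t₀ + n) i :=
  neg_le_neg_iff.1 <| trajectory_le (y := -y) hA (fun t => by simp [hy, mulVec_neg])
    (fun j => neg_le_neg (hb j)) n i

theorem trajectory_le_sub_of_mem_reachSet (hdiag : ∀ t i, A t i i ≠ 0) {γ : ℝ} (hγ : 0 ≤ γ)
    (hlow : ∀ t i j, A t i j ≠ 0 → γ ≤ A t i j) {t₀ : ℕ} {j₀ : ι} {b : ℝ}
    (hb : ∀ j, y t₀ j ≤ b) (n : ℕ) :
    ∀ i ∈ reachSet A t₀ j₀ n, y (t₀ + n) i ≤ b - γ ^ n * (b - y t₀ j₀) := by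
  have hgap : 0 ≤ b - y t₀ j₀ := sub_nonneg.2 (hb j₀)
  induction n with
  | zero =>
    intro i hi
    obtain rfl : i = j₀ := Finset.mem_singleton.1 hi
    simp
  | succ n ih =>
    intro i hi
    obtain ⟨k, hk, hik⟩ := exists_mem_reachSet_of_mem_succ hdiag hi
    rw [← add_assoc, hy]
    calc (A (t₀ + n) *ᵥ y (t₀ + n)) i ≤ b - A (t₀ + n) i k * (γ ^ n * (b - y t₀ j₀)) :=
          mulVec_apply_le_sub_of_mem_rowStochastic (hA _) (trajectory_le hA hy hb n) (ih k hk) i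
      _ ≤ b - γ ^ (n + 1) * (b - y t₀ j₀) := by
          rw [pow_succ', mul_assoc]
          gcongr
          exact hlow _ _ _ hik

theorem iSup_sub_iInf_trajectory_le [Nonempty ι] (hdiag : ∀ t i, A t i i ≠ 0) {γ : ℝ} (hγ : 0 ≤ γ)
    (hγ1 : γ ≤ 1) (hlow : ∀ t i j, A t i j ≠ 0 → γ ≤ A t i j) {ts : ℕ → ℕ} (hts : Monotone ts)
    {B : ℕ} (hbdd : ∀ k, ts (k + 1) - ts k ≤ B)
    (hjoint : ∀ k, StronglyConnected fun j i : ι => ∃ s, ts k ≤ s ∧ s < ts (k + 1) ∧ A s i j ≠ 0)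
    (k₀ : ℕ) :
    (⨆ i, y (ts (k₀ + Fintype.card ι)) i) - ⨅ i, y (ts (k₀ + Fintype.card ι)) i ≤
      (1 - γ ^ (Fintype.card ι * B)) * ((⨆ i, y (ts k₀) i) - ⨅ i, y (ts k₀) i) := by
  set n := Fintype.card ι
  set T := ts (k₀ + n)
  set t₀ := ts k₀
  obtain ⟨j₀, hj₀⟩ := exists_eq_ciInf_of_finite (f := y t₀)
  have hT : t₀ + (T - t₀) = T := Nat.add_sub_cancel' (hts (Nat.le_add_right _ _))
  have hgap : 0 ≤ (⨆ i, y t₀ i) - ⨅ i, y t₀ i :=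
    sub_nonneg.2 <|
      (ciInf_le (Finite.bddBelow_range _) j₀).trans (le_ciSup (Finite.bddAbove_range _) j₀)
  have hδ : γ ^ (n * B) ≤ γ ^ (T - t₀) :=
    pow_le_pow_of_le_one hγ hγ1 (by have := le_add_mul_of_sub_le hbdd k₀ n; omega)
  have hup : ∀ i, y T i ≤ (⨆ i, y t₀ i) - γ ^ (n * B) * ((⨆ i, y t₀ i) - ⨅ i, y t₀ i) := by
    intro i
    have hi := trajectory_le_sub_of_mem_reachSet hA hy hdiag hγ hlow
      (fun j => le_ciSup (Finite.bddAbove_range _) j) (T - t₀) i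
      (reachSet_eq_univ hts hjoint k₀ j₀ ▸ Finset.mem_univ i)
    rw [hT, hj₀] at hi
    nlinarith [mul_le_mul_of_nonneg_right hδ hgap]
  have hlo : ∀ i, (⨅ i, y t₀ i) ≤ y T i := fun i => by
    simpa only [hT] using
      le_trajectory hA hy (fun j => ciInf_le (Finite.bddBelow_range (y t₀)) j) (T - t₀) i
  linarith [ciSup_le hup, le_ciInf hlo]

theorem exists_tendsto_of_jointlyStronglyConnected [Nonempty ι] (hdiag : ∀ t i, A t i i ≠ 0)
    {γ : ℝ} (hγ : 0 < γ) (hlow : ∀ t i j, A t i j ≠ 0 → γ ≤ A t i j) {ts : ℕ → ℕ}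
    (hts : StrictMono ts) {B : ℕ} (hbdd : ∀ k, ts (k + 1) - ts k ≤ B)
    (hjoint : ∀ k, StronglyConnected fun j i : ι => ∃ s, ts k ≤ s ∧ s < ts (k + 1) ∧ A s i j ≠ 0) :
    ∃ c, ∀ i, Tendsto (fun t => y t i) atTop (𝓝 c) := by
  set n := Fintype.card ι
  set M : ℕ → ℝ := fun t => ⨆ i, y t i
  set m : ℕ → ℝ := fun t => ⨅ i, y t i
  have hγ1 : γ ≤ 1 := by
    obtain ⟨i⟩ := ‹Nonempty ι›
    exact (hlow 0 i i (hdiag 0 i)).trans (le_one_of_mem_rowStochastic (hA 0))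
  have hle_M : ∀ t i, y t i ≤ M t := fun t => le_ciSup (Finite.bddAbove_range _)
  have hm_le : ∀ t i, m t ≤ y t i := fun t => ciInf_le (Finite.bddBelow_range _)
  have hM : Antitone M := antitone_nat_of_succ_le fun t =>
    ciSup_le fun i => trajectory_le hA hy (hle_M t) 1 i
  have hm : Monotone m := monotone_nat_of_le_succ fun t =>
    le_ciInf fun i => le_trajectory hA hy (hm_le t) 1 i
  have hmM : ∀ t, m t ≤ M t := fun t => (hm_le t (Classical.arbitrary ι)).trans (hle_M t _)
  set δ := γ ^ (n * B)
  have hδ0 : 0 < δ := pow_pos hγ _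
  have hδ1 : δ ≤ 1 := pow_le_one₀ hγ.le hγ1
  have hgeo : ∀ k, M (ts (k * n)) - m (ts (k * n)) ≤ (1 - δ) ^ k * (M (ts 0) - m (ts 0)) := by
    intro k
    induction k with
    | zero => simp
    | succ k ih =>
      calc M (ts ((k + 1) * n)) - m (ts ((k + 1) * n))
          ≤ (1 - δ) * (M (ts (k * n)) - m (ts (k * n))) := by
            rw [add_one_mul]
            exact iSup_sub_iInf_trajectory_le hA hy hdiag hγ.le hγ1 hlow hts.monotone hbdd hjoint _
        _ ≤ (1 - δ) ^ (k + 1) * (M (ts 0) - m (ts 0)) := by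
            rw [pow_succ', mul_assoc]
            exact mul_le_mul_of_nonneg_left ih (by linarith)
  have hφ : Tendsto (fun k => ts (k * n)) atTop atTop :=
    (hts.comp (strictMono_mul_right_of_pos Fintype.card_pos)).tendsto_atTop
  have hgap : Tendsto (fun k => M (ts (k * n)) - m (ts (k * n))) atTop (𝓝 0) :=
    squeeze_zero (fun k => sub_nonneg.2 (hmM _)) hgeo <| by
      simpa using (tendsto_pow_atTop_nhds_zero_of_lt_one (by linarith) (by linarith)).mul_const
        (M (ts 0) - m (ts 0))
  obtain ⟨c, hmc, hMc⟩ := exists_tendsto_of_antitone_of_monotone hM hm hmM hφ hgap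
  exact ⟨c, fun i => tendsto_of_tendsto_of_tendsto_of_le_of_le hmc hMc (hm_le · i) (hle_M · i)⟩

end Consensus

section Gauge

variable {ι : Type*}

def signVec (f : ι → Bool) : ι → ℝ := fun i => if f i then 1 else -1

theorem signVec_mul_self_apply (f : ι → Bool) (i : ι) : signVec f i * signVec f i = 1 := by
  unfold signVec; split_ifs <;> norm_num

theorem signVec_mul_mul_signVec {P : Matrix ι ι ℝ} {f : ι → Bool} (hdiag : ∀ i, 0 < P i i)
    (hbal : ∀ i j, i ≠ j → P i j ≠ 0 → (f i = f j ↔ 0 < P i j)) (i j : ι) :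
    signVec f i * P i j * signVec f j = |P i j| := by
  rcases eq_or_ne (P i j) 0 with hz | hz
  · simp [hz]
  have hsign : f i = f j ↔ 0 < P i j := by
    rcases eq_or_ne i j with rfl | hij
    · simpa using hdiag i
    · exact hbal i j hij hz
  by_cases hf : f i = f j
  · have hsame : signVec f j = signVec f i := by simp [signVec, hf]
    rw [abs_of_pos (hsign.1 hf), hsame, mul_right_comm, signVec_mul_self_apply, one_mul]
  · have hneg : P i j < 0 := lt_of_le_of_ne (not_lt.1 (mt hsign.2 hf)) hz
    have hopp : signVec f i * signVec f j = -1 := by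
      revert hf; unfold signVec; cases f i <;> cases f j <;> norm_num
    rw [abs_of_neg hneg]
    linear_combination P i j * hopp

theorem abs_mulVec_signVec_mul [Fintype ι] {P : Matrix ι ι ℝ} {f : ι → Bool}
    (hP : ∀ i j, signVec f i * P i j * signVec f j = |P i j|) (v : ι → ℝ) :
    of (fun i j => |P i j|) *ᵥ (signVec f * v) = signVec f * (P *ᵥ v) := by
  ext i
  simp only [mulVec, dotProduct, of_apply, Pi.mul_apply, Finset.mul_sum, ← hP]
  refine Finset.sum_congr rfl fun j _ => ?_
  linear_combination signVec f i * P i j * v j * signVec_mul_self_apply f j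

end Gauge

section Trajectory

variable {N : ℕ} {P : ℕ → Matrix (Fin N) (Fin N) ℝ}

def transition (P : ℕ → Matrix (Fin N) (Fin N) ℝ) : ℕ → Matrix (Fin N) (Fin N) ℝ
  | 0 => 1
  | t + 1 => P t * transition P t

theorem traj_eq_mulVec (x0 : Fin N → ℝ) (t : ℕ) : traj P x0 t = transition P t *ᵥ x0 := by
  induction t with
  | zero => simp [traj, transition]
  | succ t ih => simp [traj, transition, ih, mulVec_mulVec]

variable {f : Fin N → Bool} (hP : ∀ t i j, signVec f i * P t i j * signVec f j = |P t i j|)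
include hP

theorem signVec_mul_traj_succ (x0 : Fin N → ℝ) (t : ℕ) :
    signVec f * traj P x0 (t + 1) = of (fun i j => |P t i j|) *ᵥ (signVec f * traj P x0 t) :=
  (abs_mulVec_signVec_mul (hP t) _).symm

theorem signVec_mul_traj_signVec (habs : ∀ t i, ∑ j, |P t i j| = 1) (t : ℕ) :
    signVec f * traj P (signVec f) t = 1 := by
  induction t with
  | zero => exact funext (signVec_mul_self_apply f)
  | succ t ih =>
    rw [signVec_mul_traj_succ hP, ih,
      one_vecMul_of_mem_rowStochastic (abs_mem_rowStochastic (habs t))]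

end Trajectory

theorem stmt12_general {N : ℕ} (P : ℕ → Matrix (Fin N) (Fin N) ℝ) (γ : ℝ)
    (hγ : 0 < γ ∧ γ < 1)
    (habs : ∀ t i, ∑ j, |P t i j| = 1) (hdiag : ∀ t i, 0 < P t i i)
    (hlow : ∀ t i j, P t i j ≠ 0 → γ ≤ |P t i j|)
    -- a fixed bipartition into two nonempty sets, valid for every G(P(t))
    (f : Fin N → Bool)
    (hfne : (∃ i, f i = true) ∧ (∃ i, f i = false))
    (hbal : ∀ t i j, i ≠ j → P t i j ≠ 0 → (f i = f j ↔ 0 < P t i j))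
    -- infinite sequence of uniformly bounded intervals with jointly strongly
    -- connected union graphs
    (ts : ℕ → ℕ) (B : ℕ) (hmono : ∀ k, ts k < ts (k + 1))
    (hbdd : ∀ k, ts (k + 1) - ts k ≤ B)
    (hjoint : ∀ k, StronglyConnected (fun j i : Fin N =>
      ∃ s, ts k ≤ s ∧ s < ts (k + 1) ∧ i ≠ j ∧ P s i j ≠ 0)) :
    -- polarization
    ∀ᵐ x0 : Fin N → ℝ ∂volume, ∃ a : ℝ, a ≠ 0 ∧
      ∀ i, Tendsto (fun t => traj P x0 t i) atTop
        (nhds (if f i then a else -a)) := by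
  obtain ⟨⟨i₀, -⟩, -⟩ := hfne
  have : Nonempty (Fin N) := ⟨i₀⟩
  have hP t := signVec_mul_mul_signVec (hdiag t) (hbal t)
  have hcons (x0 : Fin N → ℝ) :
      ∃ c, ∀ i, Tendsto (fun t => (signVec f * traj P x0 t) i) atTop (𝓝 c) :=
    exists_tendsto_of_jointlyStronglyConnected (fun t => abs_mem_rowStochastic (habs t))
      (signVec_mul_traj_succ hP x0) (fun t i => abs_ne_zero.2 (hdiag t i).ne') hγ.1
      (fun t i j h => hlow t i j (abs_ne_zero.1 h)) (strictMono_nat_of_lt_succ hmono) hbdd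
      fun k a b => Relation.ReflTransGen.mono
        (fun _ _ ⟨s, h₁, h₂, _, h⟩ => ⟨s, h₁, h₂, abs_ne_zero.2 h⟩) a b (hjoint k a b)
  choose c hc using hcons
  let L : (Fin N → ℝ) →ₗ[ℝ] ℝ := linearMapOfTendsto c
    (fun t => signVec f i₀ • (LinearMap.proj i₀ ∘ₗ (transition P t).mulVecLin))
    (tendsto_pi_nhds.2 fun x0 => by simpa [traj_eq_mulVec] using hc x0 i₀)
  have hL : L (signVec f) = 1 :=
    tendsto_nhds_unique (hc _ i₀) <| by
      simpa only [signVec_mul_traj_signVec hP habs, Pi.one_apply] using tendsto_const_nhds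
  filter_upwards [ae_linearMap_ne_zero volume (L := L) fun h => by simp [h] at hL] with x0 hx0
  refine ⟨c x0, hx0, fun i => ?_⟩
  have h := (hc x0 i).const_mul (signVec f i)
  simp only [Pi.mul_apply, ← mul_assoc, signVec_mul_self_apply, one_mul] at h
  simpa [signVec, apply_ite] using h

theorem stmt12 {N : ℕ} (P : ℕ → Matrix (Fin N) (Fin N) ℝ) (γ : ℝ)
    (hγ : 0 < γ ∧ γ < 1)
    (habs : ∀ t i, ∑ j, |P t i j| = 1) (hdiag : ∀ t i, 0 < P t i i)
    (hlow : ∀ t i j, P t i j ≠ 0 → γ ≤ |P t i j|)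
    -- a fixed bipartition into two nonempty sets, valid for every G(P(t))
    (f : Fin N → Bool)
    (hfne : (∃ i, f i = true) ∧ (∃ i, f i = false))
    (hbal : ∀ t i j, i ≠ j → P t i j ≠ 0 → (f i = f j ↔ 0 < P t i j))
    -- infinite sequence of uniformly bounded intervals with jointly strongly
    -- connected union graphs
    (ts : ℕ → ℕ) (B : ℕ) (hts0 : ts 0 = 0) (hmono : ∀ k, ts k < ts (k + 1))
    (hbdd : ∀ k, ts (k + 1) - ts k ≤ B)
    (hjoint : ∀ k, StronglyConnected (fun j i : Fin N =>
      ∃ s, ts k ≤ s ∧ s < ts (k + 1) ∧ i ≠ j ∧ P s i j ≠ 0)) :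
    -- polarization
    ∀ᵐ x0 : Fin N → ℝ ∂volume, ∃ a : ℝ, a ≠ 0 ∧
      ∀ i, Tendsto (fun t => traj P x0 t i) atTop
        (nhds (if f i then a else -a)) :=
  stmt12_general P γ hγ habs hdiag hlow f hfne hbal ts B hmono hbdd hjoint
end
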